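/- (Proposition 1) Let μ ∈ [0,1] and define the map F_μ on qubit states by F_μ(ρ_m) := (1/2)(I − μ(m_x X + m_y Y + m_z Z)). For every λ ∈ [0, (1+μ)/2], there exists a family of positive semidefinite 4×4 complex matrices {π_{[i,j,k]}}_{i,j,k∈{±1}} with Σ_{i,j,k} π_{[i,j,k]} = I⊗I such that for all m ∈ ℝ³ with ‖m‖ ≤ 1: Σ_{j,k} Tr[π_{[i,j,k]} (ρ_m ⊗ F_μ(ρ_m))] = (1/2)(1 + λ·i·m_x) for each i ∈ {±1}, Σ_{i,k} Tr[π_{[i,j,k]} (ρ_m ⊗ F_μ(ρ_m))] = (1/2)(1 + λ·j·m_y) for each j ∈ {±1}, and Σ_{i,j} Tr[π_{[i,j,k]} (ρ_m ⊗ F_μ(ρ_m))] = (1/2)(1 + λ·k·m_z) for each k ∈ {±1}. That is, the unsharp observables X^λ, Y^λ, Z^λ are jointly measurable on the configuration ρ_m ⊗ F_μ(ρ_m) for all λ ≤ (1+μ)/2. -/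

import Mathlib

open Matrix Complex
open scoped Kronecker Matrix ComplexOrder

noncomputable section

/-- Pauli matrix σ_x. -/
def σx : Matrix (Fin 2) (Fin 2) ℂ := !![0, 1; 1, 0]
/-- Pauli matrix σ_y. -/
def σy : Matrix (Fin 2) (Fin 2) ℂ := !![0, -Complex.I; Complex.I, 0]
/-- Pauli matrix σ_z. -/
def σz : Matrix (Fin 2) (Fin 2) ℂ := !![1, 0; 0, -1]

/-- The two-element set {+1, -1} of outcomes/signs. -/
def pm : Finset ℝ := {1, -1}

/-- Qubit state with Bloch vector m: ρ_m = (1/2)(I + m·σ). -/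
def rho (m : Fin 3 → ℝ) : Matrix (Fin 2) (Fin 2) ℂ :=
  (2 : ℂ)⁻¹ • ((1 : Matrix (Fin 2) (Fin 2) ℂ) + (m 0 : ℂ) • σx + (m 1 : ℂ) • σy + (m 2 : ℂ) • σz)

/-- The antiparallel-configuration effects Π↑↓_{[i,j,k]}. -/
def PiAnti (i j k : ℝ) : Matrix (Fin 2 × Fin 2) (Fin 2 × Fin 2) ℂ :=
  (16 : ℂ)⁻¹ • ((2 : ℂ) • (1 : Matrix (Fin 2 × Fin 2) (Fin 2 × Fin 2) ℂ)
    + (i : ℂ) • (σx ⊗ₖ (1 : Matrix (Fin 2) (Fin 2) ℂ) - (1 : Matrix (Fin 2) (Fin 2) ℂ) ⊗ₖ σx)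
    + (j : ℂ) • (σy ⊗ₖ (1 : Matrix (Fin 2) (Fin 2) ℂ) - (1 : Matrix (Fin 2) (Fin 2) ℂ) ⊗ₖ σy)
    + (k : ℂ) • (σz ⊗ₖ (1 : Matrix (Fin 2) (Fin 2) ℂ) - (1 : Matrix (Fin 2) (Fin 2) ℂ) ⊗ₖ σz)
    - ((i * j : ℝ) : ℂ) • (σx ⊗ₖ σy + σy ⊗ₖ σx)
    - ((j * k : ℝ) : ℂ) • (σy ⊗ₖ σz + σz ⊗ₖ σy)
    - ((k * i : ℝ) : ℂ) • (σz ⊗ₖ σx + σx ⊗ₖ σz))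

/-- The GPT effects Π#_{[i,j,k]}. -/
def PiSharp (i j k : ℝ) : Matrix (Fin 2 × Fin 2) (Fin 2 × Fin 2) ℂ :=
  (16 : ℂ)⁻¹ • ((2 : ℂ) • (1 : Matrix (Fin 2 × Fin 2) (Fin 2 × Fin 2) ℂ)
    + (i : ℂ) • (σx ⊗ₖ (1 : Matrix (Fin 2) (Fin 2) ℂ) + (1 : Matrix (Fin 2) (Fin 2) ℂ) ⊗ₖ σx)
    + (j : ℂ) • (σy ⊗ₖ (1 : Matrix (Fin 2) (Fin 2) ℂ) + (1 : Matrix (Fin 2) (Fin 2) ℂ) ⊗ₖ σy)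
    + (k : ℂ) • (σz ⊗ₖ (1 : Matrix (Fin 2) (Fin 2) ℂ) + (1 : Matrix (Fin 2) (Fin 2) ℂ) ⊗ₖ σz)
    + ((i * j : ℝ) : ℂ) • (σx ⊗ₖ σy + σy ⊗ₖ σx)
    + ((j * k : ℝ) : ℂ) • (σy ⊗ₖ σz + σz ⊗ₖ σy)
    + ((k * i : ℝ) : ℂ) • (σz ⊗ₖ σx + σx ⊗ₖ σz))

end

noncomputable section

/-- The parallel-configuration effects Π↑↑_{[i,j,k]} of Carmeli et al. -/
def PiPar (i j k : ℝ) : Matrix (Fin 2 × Fin 2) (Fin 2 × Fin 2) ℂ :=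
  (32 : ℂ)⁻¹ • ((4 : ℂ) • (1 : Matrix (Fin 2 × Fin 2) (Fin 2 × Fin 2) ℂ)
    + ((Real.sqrt 3 * i : ℝ) : ℂ) • (σx ⊗ₖ (1 : Matrix (Fin 2) (Fin 2) ℂ) + (1 : Matrix (Fin 2) (Fin 2) ℂ) ⊗ₖ σx)
    + ((Real.sqrt 3 * j : ℝ) : ℂ) • (σy ⊗ₖ (1 : Matrix (Fin 2) (Fin 2) ℂ) + (1 : Matrix (Fin 2) (Fin 2) ℂ) ⊗ₖ σy)
    + ((Real.sqrt 3 * k : ℝ) : ℂ) • (σz ⊗ₖ (1 : Matrix (Fin 2) (Fin 2) ℂ) + (1 : Matrix (Fin 2) (Fin 2) ℂ) ⊗ₖ σz)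
    + ((i * j : ℝ) : ℂ) • (σx ⊗ₖ σy + σy ⊗ₖ σx)
    + ((j * k : ℝ) : ℂ) • (σy ⊗ₖ σz + σz ⊗ₖ σy)
    + ((k * i : ℝ) : ℂ) • (σz ⊗ₖ σx + σx ⊗ₖ σz))

/-- The universal spin-flip (transformation) map F(A) = (Tr A)·I − A. -/
def Flip (A : Matrix (Fin 2) (Fin 2) ℂ) : Matrix (Fin 2) (Fin 2) ℂ :=
  A.trace • (1 : Matrix (Fin 2) (Fin 2) ℂ) - A

/-- The map id ⊗ Φ on M₂(ℂ) ⊗ M₂(ℂ), acting as A ⊗ B ↦ A ⊗ Φ(B) extended linearly. -/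
def idTensor (Φ : Matrix (Fin 2) (Fin 2) ℂ → Matrix (Fin 2) (Fin 2) ℂ)
    (M : Matrix (Fin 2 × Fin 2) (Fin 2 × Fin 2) ℂ) : Matrix (Fin 2 × Fin 2) (Fin 2 × Fin 2) ℂ :=
  Matrix.of fun p q => Φ (Matrix.of fun b d => M (p.1, b) (q.1, d)) p.2 q.2

/-- Choi matrix Σ_{k,l} E_{kl} ⊗ Λ(E_{kl}) of a linear map Λ on M₂(ℂ). -/
def Choi (Λ : Matrix (Fin 2) (Fin 2) ℂ →ₗ[ℂ] Matrix (Fin 2) (Fin 2) ℂ) :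
    Matrix (Fin 2 × Fin 2) (Fin 2 × Fin 2) ℂ :=
  ∑ k : Fin 2, ∑ l : Fin 2,
    (Matrix.single k l (1 : ℂ)) ⊗ₖ Λ (Matrix.single k l (1 : ℂ))

/-- Sign value of a Boolean outcome: true ↦ +1, false ↦ −1. -/
def sgn (b : Bool) : ℝ := if b then 1 else -1

/-- Unsharp spin effect P^a_{n̂,λ} = (1/2)(I + λ a n̂·σ). -/
def Peff (n : Fin 3 → ℝ) (lam a : ℝ) : Matrix (Fin 2) (Fin 2) ℂ :=
  (2 : ℂ)⁻¹ • ((1 : Matrix (Fin 2) (Fin 2) ℂ)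
    + ((lam * a * n 0 : ℝ) : ℂ) • σx + ((lam * a * n 1 : ℝ) : ℂ) • σy
    + ((lam * a * n 2 : ℝ) : ℂ) • σz)

/-- Computational basis vector |ab⟩ of ℂ²⊗ℂ². -/
def ket (a b : Fin 2) : Fin 2 × Fin 2 → ℂ := fun p => if p = (a, b) then 1 else 0

/-- Bell vector |φ⁺⟩. -/
def phiP : Fin 2 × Fin 2 → ℂ := ((Real.sqrt 2 : ℝ) : ℂ)⁻¹ • (ket 0 0 + ket 1 1)
/-- Bell vector |φ⁻⟩. -/
def phiM : Fin 2 × Fin 2 → ℂ := ((Real.sqrt 2 : ℝ) : ℂ)⁻¹ • (ket 0 0 - ket 1 1)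
/-- Bell vector |ψ⁺⟩. -/
def psiP : Fin 2 × Fin 2 → ℂ := ((Real.sqrt 2 : ℝ) : ℂ)⁻¹ • (ket 0 1 + ket 1 0)
/-- Bell vector |ψ⁻⟩. -/
def psiM : Fin 2 × Fin 2 → ℂ := ((Real.sqrt 2 : ℝ) : ℂ)⁻¹ • (ket 0 1 - ket 1 0)

/-- The vector |ξ_{[i,j,k]}⟩ = (1/2)(|ψ⁻⟩ − i|φ⁻⟩ + 𝐢 j|φ⁺⟩ + k|ψ⁺⟩). -/
def xi (i j k : ℝ) : Fin 2 × Fin 2 → ℂ :=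
  (2 : ℂ)⁻¹ • (psiM - (i : ℂ) • phiM + (Complex.I * (j : ℂ)) • phiP + (k : ℂ) • psiP)

end

/-!
Mix the antiparallel joint measurement `PiAnti` with white noise:
`π_{ijk} = t Π↑↓_{ijk} + (1 - t) I / 8`. Since `Π↑↓_{ijk} = ½ |ξ_{ijk}⟩⟨ξ_{ijk}|`, every
`π_{ijk}` is positive semidefinite, and the `Π↑↓_{ijk}` sum to `I ⊗ I`.
On `ρ_m ⊗ ρ_{-μm}` the `i`-marginal of `Π↑↓` is `½ (1 + i (1 + μ) m_x / 2)`: the local terms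
`σ ⊗ I - I ⊗ σ` see the Bloch vectors `m` and `-μm` with opposite signs, while the correlation
terms cancel on summing over `j, k`. Choosing `t = 2λ / (1 + μ) ∈ [0, 1]` turns this sharpness
`(1 + μ) / 2` into `λ`.
-/

lemma sum_pm {M : Type*} [AddCommMonoid M] (f : ℝ → M) : ∑ x ∈ pm, f x = f 1 + f (-1) :=
  Finset.sum_pair (by norm_num)

lemma sq_eq_one_of_mem_pm {x : ℝ} (hx : x ∈ pm) : x ^ 2 = 1 := by
  rcases Finset.mem_insert.mp hx with rfl | hx
  · norm_num
  · rw [Finset.mem_singleton.mp hx]; norm_num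

lemma exists_mem_Icc_mul_eq {a b : ℝ} (ha : 0 ≤ a) (hab : a ≤ b) :
    ∃ t ∈ Set.Icc (0 : ℝ) 1, t * b = a := by
  refine ⟨a / b, ⟨div_nonneg ha (ha.trans hab), div_le_one_of_le₀ hab (ha.trans hab)⟩, ?_⟩
  rcases eq_or_ne b 0 with rfl | hb
  · simp [le_antisymm hab ha]
  · exact div_mul_cancel₀ a hb

section BlochVector

variable (m : Fin 3 → ℝ)

lemma rho_eq_of : rho m =
    !![(1 + m 2 : ℂ) / 2, (m 0 - Complex.I * m 1) / 2;
      (m 0 + Complex.I * m 1) / 2, (1 - m 2 : ℂ) / 2] := by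
  ext a b
  fin_cases a <;> fin_cases b <;> simp [rho, σx, σy, σz] <;> ring

lemma trace_rho : (rho m).trace = 1 := by
  rw [rho_eq_of, trace_fin_two_of]; ring

lemma trace_σx_mul_rho : (σx * rho m).trace = m 0 := by
  rw [rho_eq_of, σx, mul_fin_two, trace_fin_two_of]; ring

lemma trace_σy_mul_rho : (σy * rho m).trace = m 1 := by
  rw [rho_eq_of, σy, mul_fin_two, trace_fin_two_of]
  linear_combination (-(m 1 : ℂ)) * Complex.I_sq

lemma trace_σz_mul_rho : (σz * rho m).trace = m 2 := by
  rw [rho_eq_of, σz, mul_fin_two, trace_fin_two_of]; ring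

end BlochVector

lemma trace_kronecker_mul_kronecker {l n R : Type*} [Fintype l] [Fintype n] [CommSemiring R]
    (A B : Matrix l l R) (C D : Matrix n n R) :
    ((A ⊗ₖ C) * (B ⊗ₖ D)).trace = (A * B).trace * (C * D).trace := by
  rw [← mul_kronecker_mul, trace_kronecker]

lemma sum_piAnti : ∑ i ∈ pm, ∑ j ∈ pm, ∑ k ∈ pm, PiAnti i j k = 1 := by
  simp only [sum_pm, PiAnti]
  push_cast
  module

section PiAnti

variable (i j k : ℝ)

def xiUnnormalized : Fin 2 × Fin 2 → ℂ := fun p =>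
  !![Complex.I * j - i, 1 + k; k - 1, i + Complex.I * j] p.1 p.2

lemma xi_eq_smul : xi i j k = ((√2 / 4 : ℝ) : ℂ) • xiUnnormalized i j k := by
  have hinv : ((√2 : ℝ) : ℂ)⁻¹ = ((√2 / 2 : ℝ) : ℂ) := by
    rw [← Complex.ofReal_inv]
    congr 1
    field_simp
    simp
  ext ⟨a, b⟩
  fin_cases a <;> fin_cases b <;>
    simp [xi, psiM, psiP, phiM, phiP, ket, xiUnnormalized, hinv] <;> ring

variable {i j k}

lemma piAnti_eq_smul_vecMulVec_xiUnnormalized (hi : i ^ 2 = 1) (hj : j ^ 2 = 1) (hk : k ^ 2 = 1) :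
    PiAnti i j k =
      (16 : ℂ)⁻¹ • vecMulVec (xiUnnormalized i j k) (star (xiUnnormalized i j k)) := by
  ext ⟨a, b⟩ ⟨c, d⟩
  fin_cases a <;> fin_cases b <;> fin_cases c <;> fin_cases d <;>
    simp [PiAnti, xiUnnormalized, vecMulVec_apply, σx, σy, σz, Complex.ext_iff] <;> grind

lemma piAnti_eq_half_vecMulVec_xi (hi : i ^ 2 = 1) (hj : j ^ 2 = 1) (hk : k ^ 2 = 1) :
    PiAnti i j k = (2 : ℂ)⁻¹ • vecMulVec (xi i j k) (star (xi i j k)) := by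
  have hsqrt : ((√2 : ℝ) : ℂ) ^ 2 = 2 := by
    rw [← Complex.ofReal_pow, Real.sq_sqrt zero_le_two, Complex.ofReal_ofNat]
  rw [piAnti_eq_smul_vecMulVec_xiUnnormalized hi hj hk, xi_eq_smul, star_smul, smul_vecMulVec,
    vecMulVec_smul, smul_smul, smul_smul]
  congr 1
  simp only [Complex.star_def, Complex.conj_ofReal]
  push_cast
  linear_combination (-1 / 32 : ℂ) * hsqrt

lemma posSemidef_piAnti (hi : i ^ 2 = 1) (hj : j ^ 2 = 1) (hk : k ^ 2 = 1) :
    (PiAnti i j k).PosSemidef := by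
  rw [piAnti_eq_half_vecMulVec_xi hi hj hk]
  exact (posSemidef_vecMulVec_self_star _).smul (by positivity)

variable (i j k)

lemma trace_piAnti_mul_kronecker_rho (m n : Fin 3 → ℝ) :
    (PiAnti i j k * (rho m ⊗ₖ rho n)).trace =
      ((16⁻¹ * (2 + i * (m 0 - n 0) + j * (m 1 - n 1) + k * (m 2 - n 2)
        - i * j * (m 0 * n 1 + m 1 * n 0) - j * k * (m 1 * n 2 + m 2 * n 1)
        - k * i * (m 2 * n 0 + m 0 * n 2)) : ℝ) : ℂ) := by
  simp only [PiAnti, smul_mul_assoc, add_mul, sub_mul, trace_smul, trace_add, trace_sub,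
    trace_kronecker_mul_kronecker, Matrix.one_mul, trace_kronecker, trace_rho, trace_σx_mul_rho,
    trace_σy_mul_rho, trace_σz_mul_rho, smul_eq_mul]
  push_cast
  ring

end PiAnti

noncomputable def noisyPiAnti (t i j k : ℝ) : Matrix (Fin 2 × Fin 2) (Fin 2 × Fin 2) ℂ :=
  t • PiAnti i j k + ((1 - t) / 8) • 1

section NoisyPiAnti

variable {t : ℝ}

lemma posSemidef_noisyPiAnti (ht : t ∈ Set.Icc (0 : ℝ) 1) {i j k : ℝ}
    (hi : i ^ 2 = 1) (hj : j ^ 2 = 1) (hk : k ^ 2 = 1) : (noisyPiAnti t i j k).PosSemidef :=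
  ((posSemidef_piAnti hi hj hk).smul ht.1).add (PosSemidef.one.smul (by linarith [ht.2]))

variable (t)

lemma sum_noisyPiAnti : ∑ i ∈ pm, ∑ j ∈ pm, ∑ k ∈ pm, noisyPiAnti t i j k = 1 := by
  simp only [noisyPiAnti, Finset.sum_add_distrib, ← Finset.smul_sum, sum_piAnti]
  simp only [sum_pm]
  module

lemma trace_noisyPiAnti_mul_kronecker_rho (i j k μ : ℝ) (m : Fin 3 → ℝ) :
    (noisyPiAnti t i j k * (rho m ⊗ₖ rho (-(μ • m)))).trace =
      ((1 / 8 + t / 16 * ((1 + μ) * (i * m 0 + j * m 1 + k * m 2)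
        + 2 * μ * (i * j * (m 0 * m 1) + j * k * (m 1 * m 2) + k * i * (m 2 * m 0)))) : ℝ) := by
  simp only [noisyPiAnti, add_mul, smul_mul_assoc, Matrix.one_mul, trace_add, trace_smul,
    trace_piAnti_mul_kronecker_rho, trace_kronecker, trace_rho, Complex.real_smul]
  simp only [Pi.neg_apply, Pi.smul_apply, smul_eq_mul]
  push_cast
  ring

end NoisyPiAnti

theorem jointly_measurable_Fmu_config_general (μ : ℝ)
    (lam : ℝ) (hlam : lam ∈ Set.Icc (0 : ℝ) ((1 + μ) / 2)) :
    ∃ π : ℝ → ℝ → ℝ → Matrix (Fin 2 × Fin 2) (Fin 2 × Fin 2) ℂ,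
      (∀ i ∈ pm, ∀ j ∈ pm, ∀ k ∈ pm, (π i j k).PosSemidef) ∧
      (∑ i ∈ pm, ∑ j ∈ pm, ∑ k ∈ pm, π i j k = 1) ∧
      ∀ m : Fin 3 → ℝ, m 0 ^ 2 + m 1 ^ 2 + m 2 ^ 2 ≤ 1 →
        (∀ i ∈ pm, ∑ j ∈ pm, ∑ k ∈ pm, (π i j k * (rho m ⊗ₖ rho (-(μ • m)))).trace
            = ((1 / 2 * (1 + lam * i * m 0) : ℝ) : ℂ)) ∧
        (∀ j ∈ pm, ∑ i ∈ pm, ∑ k ∈ pm, (π i j k * (rho m ⊗ₖ rho (-(μ • m)))).trace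
            = ((1 / 2 * (1 + lam * j * m 1) : ℝ) : ℂ)) ∧
        (∀ k ∈ pm, ∑ i ∈ pm, ∑ j ∈ pm, (π i j k * (rho m ⊗ₖ rho (-(μ • m)))).trace
            = ((1 / 2 * (1 + lam * k * m 2) : ℝ) : ℂ)) := by
  obtain ⟨t, ht, htlam⟩ :=
    exists_mem_Icc_mul_eq (a := 2 * lam) (b := 1 + μ) (by linarith [hlam.1]) (by linarith [hlam.2])
  have hC : (t : ℂ) * (1 + μ) = 2 * lam := by exact_mod_cast htlam
  refine ⟨noisyPiAnti t, fun i hi j hj k hk => posSemidef_noisyPiAnti ht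
    (sq_eq_one_of_mem_pm hi) (sq_eq_one_of_mem_pm hj) (sq_eq_one_of_mem_pm hk),
    sum_noisyPiAnti t, fun m _ => ⟨fun i _ => ?_, fun j _ => ?_, fun k _ => ?_⟩⟩
  all_goals
    simp only [sum_pm, trace_noisyPiAnti_mul_kronecker_rho]
    push_cast
  · linear_combination (i * m 0 / 4 : ℂ) * hC
  · linear_combination (j * m 1 / 4 : ℂ) * hC
  · linear_combination (k * m 2 / 4 : ℂ) * hC

/-- Proposition 1: X^λ, Y^λ, Z^λ are jointly measurable on the
configuration ρ_m ⊗ F_μ(ρ_m) for all λ ∈ [0, (1+μ)/2], where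
F_μ(ρ_m) = (1/2)(I − μ m·σ) = ρ_{−μm}. -/
theorem jointly_measurable_Fmu_config (μ : ℝ) (hμ : μ ∈ Set.Icc (0 : ℝ) 1)
    (lam : ℝ) (hlam : lam ∈ Set.Icc (0 : ℝ) ((1 + μ) / 2)) :
    ∃ π : ℝ → ℝ → ℝ → Matrix (Fin 2 × Fin 2) (Fin 2 × Fin 2) ℂ,
      (∀ i ∈ pm, ∀ j ∈ pm, ∀ k ∈ pm, (π i j k).PosSemidef) ∧
      (∑ i ∈ pm, ∑ j ∈ pm, ∑ k ∈ pm, π i j k = 1) ∧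
      ∀ m : Fin 3 → ℝ, m 0 ^ 2 + m 1 ^ 2 + m 2 ^ 2 ≤ 1 →
        (∀ i ∈ pm, ∑ j ∈ pm, ∑ k ∈ pm, (π i j k * (rho m ⊗ₖ rho (-(μ • m)))).trace
            = ((1 / 2 * (1 + lam * i * m 0) : ℝ) : ℂ)) ∧
        (∀ j ∈ pm, ∑ i ∈ pm, ∑ k ∈ pm, (π i j k * (rho m ⊗ₖ rho (-(μ • m)))).trace
            = ((1 / 2 * (1 + lam * j * m 1) : ℝ) : ℂ)) ∧
        (∀ k ∈ pm, ∑ i ∈ pm, ∑ j ∈ pm, (π i j k * (rho m ⊗ₖ rho (-(μ • m)))).trace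
            = ((1 / 2 * (1 + lam * k * m 2) : ℝ) : ℂ)) :=
  jointly_measurable_Fmu_config_general μ lam hlam
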